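/- arXiv:math/0205216 — 3 statements merged into one kernel-verified Lean document; each statement's English description precedes it below -/
import Mathlib

section
/- There is no morphism f on finite words over {1,2,3} satisfying all of the following: f(w) = w where w is the Arshon sequence; |f(1)| + |f(2)| + |f(3)| > 3; |f(1)| is minimal among all morphisms g with g(w) = w and |g(1)| + |g(2)| + |g(3)| > 3; and |f(1)|, |f(2)|, |f(3)| are all divisible by 3. -/
open List Filter

/-- Image of a letter in an odd (1-based) position under ψ. -/
def oddBlock : ℕ → List ℕ
  | 1 => [1, 2, 3]
  | 2 => [2, 3, 1]
  | 3 => [3, 1, 2]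
  | _ => []

/-- Image of a letter in an even (1-based) position under ψ. -/
def evenBlock : ℕ → List ℕ
  | 1 => [3, 2, 1]
  | 2 => [1, 3, 2]
  | 3 => [2, 1, 3]
  | _ => []

/-- The Arshon map ψ: replace the letter at each odd (1-based) position by its
`oddBlock`, and the letter at each even position by its `evenBlock`. -/
def psi (l : List ℕ) : List ℕ :=
  ((l.zipIdx.map Prod.swap).map fun p => if p.1 % 2 = 0 then oddBlock p.2 else evenBlock p.2).flatten

/-- The Arshon sequence `w = lim ψ^k(1)` as an infinite word: since
`|ψ^[n+1] [1]| = 3^(n+1) > n`, the `n`-th letter (0-based) is well defined. -/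
def arshon (n : ℕ) : ℕ := (psi^[n + 1] [1]).getD n 0

/-- A word over the alphabet {1,2,3}. -/
def Word123 (l : List ℕ) : Prop := ∀ a ∈ l, a = 1 ∨ a = 2 ∨ a = 3

/-- A morphism on finite words over {1,2,3}. -/
def IsMorphism123 (f : List ℕ → List ℕ) : Prop :=
  (∀ u v, f (u ++ v) = f u ++ f v) ∧ ∀ l, Word123 l → Word123 (f l)

/-- `f(w) = w` where `w` is the infinite Arshon word: the image of every finite
prefix of `w` is again a prefix of `w`, and these images have unbounded length
(so that `f(w)` is genuinely the infinite word `w`). -/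
def FixesArshon (f : List ℕ → List ℕ) : Prop :=
  (∀ n, f ((List.range n).map arshon)
      = (List.range (f ((List.range n).map arshon)).length).map arshon) ∧
  Tendsto (fun n => (f ((List.range n).map arshon)).length) atTop atTop

/-- The infinite word `s` is obtained by iterating the morphism `f` on the
letter 1: `f(1)` begins with 1, `|f^k(1)| → ∞`, and `s = lim f^k(1)`. -/
def IterLimit (f : List ℕ → List ℕ) (s : ℕ → ℕ) : Prop :=
  (∃ t, f [1] = 1 :: t) ∧
  Tendsto (fun k => (f^[k] [1]).length) atTop atTop ∧
  ∀ k n, n < (f^[k] [1]).length → (f^[k] [1]).getD n 0 = s n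

/-!
The Arshon word `w` is square-free, and its letter `3k + 1` is the successor of its letter `k`
in the cycle `1 → 2 → 3 → 1`. If `f(w) = w`, the image of the letter `w n` is the factor of `w`
starting at `|f(w 0 ⋯ w (n-1))|`. Hence, when `aba` occurs in `w` and `f(b)` is empty,
`f(a) f(a)` is a factor of `w`, so `f(a)` is empty too; the factors `313, 212, 131, 121` then
show that no image is empty. If all image lengths are divisible by 3, every image starts at a
multiple of 3, and reading off the letters `3k + 1` of the images gives a morphism `g` fixing `w`
with `|g(a)| = |f(a)| / 3 < |f(a)|`. Minimality of `|f(1)|` thus forces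
`|g(1)| + |g(2)| + |g(3)| = 3`, i.e. all images of `f` have length 3, which fails because
`f(1) = w 0 w 1 w 2 = 123` would also equal `w 9 w 10 w 11 = 321`.
-/

def nextLetter : ℕ → ℕ
  | 1 => 2
  | 2 => 3
  | _ => 1

def prevLetter : ℕ → ℕ
  | 1 => 3
  | 2 => 1
  | _ => 2

lemma prevLetter_nextLetter {x : ℕ} (hx : x = 1 ∨ x = 2 ∨ x = 3) :
    prevLetter (nextLetter x) = x := by
  rcases hx with rfl | rfl | rfl <;> rfl

lemma nextLetter_injOn : Set.InjOn nextLetter {x | x = 1 ∨ x = 2 ∨ x = 3} := by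
  intro x hx y hy h
  rw [← prevLetter_nextLetter hx, h, prevLetter_nextLetter hy]

lemma prevLetter_injOn : Set.InjOn prevLetter {x | x = 1 ∨ x = 2 ∨ x = 3} := by
  rintro x (rfl | rfl | rfl) y (rfl | rfl | rfl) h <;> simp_all [prevLetter]

lemma prevLetter_mem (x : ℕ) : prevLetter x = 1 ∨ prevLetter x = 2 ∨ prevLetter x = 3 := by
  unfold prevLetter; split <;> simp

def arshonRec : ℕ → ℕ
  | 0 => 1
  | k + 1 =>
    ((if (k + 1) / 3 % 2 = 0 then oddBlock else evenBlock) (arshonRec ((k + 1) / 3))).getD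
      ((k + 1) % 3) 0
decreasing_by exact Nat.div_lt_self k.succ_pos (by norm_num)

lemma arshonRec_eq (n : ℕ) :
    arshonRec n = ((if n / 3 % 2 = 0 then oddBlock else evenBlock) (arshonRec (n / 3))).getD
      (n % 3) 0 := by
  rcases n with _ | k
  · simp [arshonRec, oddBlock]
  · rw [arshonRec]

lemma arshonRec_three_mul_add (q : ℕ) {r : ℕ} (hr : r < 3) :
    arshonRec (3 * q + r) =
      ((if q % 2 = 0 then oddBlock else evenBlock) (arshonRec q)).getD r 0 := by
  rw [arshonRec_eq, show (3 * q + r) / 3 = q by omega, show (3 * q + r) % 3 = r by omega]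

lemma arshonRec_mem (n : ℕ) : arshonRec n = 1 ∨ arshonRec n = 2 ∨ arshonRec n = 3 := by
  induction n using Nat.strong_induction_on with
  | _ n ih =>
    rcases n with _ | k
    · simp [arshonRec]
    rw [arshonRec_eq]
    have hr : (k + 1) % 3 < 3 := Nat.mod_lt _ (by norm_num)
    rcases ih _ (Nat.div_lt_self k.succ_pos (by norm_num : 1 < 3)) with h | h | h <;> rw [h] <;>
      split <;> interval_cases (k + 1) % 3 <;> simp [oddBlock, evenBlock]

lemma psi_append_singleton (u : List ℕ) (x : ℕ) :
    psi (u ++ [x]) = psi u ++ (if u.length % 2 = 0 then oddBlock x else evenBlock x) := by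
  simp [psi, List.zipIdx_append]

lemma psi_map_arshonRec_range (N : ℕ) :
    psi ((List.range N).map arshonRec) = (List.range (3 * N)).map arshonRec := by
  induction N with
  | zero => rfl
  | succ N ih =>
    rw [List.range_succ, List.map_append, List.map_singleton, psi_append_singleton, ih,
      List.length_map, List.length_range, show 3 * (N + 1) = 3 * N + 3 by ring, List.range_add,
      List.map_append]
    congr 1
    simp only [List.range_succ, List.range_zero, List.nil_append, List.map_cons, List.map_nil,
      List.cons_append]
    rw [arshonRec_three_mul_add N (by norm_num : 0 < 3),
      arshonRec_three_mul_add N (by norm_num : 1 < 3),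
      arshonRec_three_mul_add N (by norm_num : 2 < 3)]
    rcases arshonRec_mem N with h | h | h <;> rw [h] <;> split <;> rfl

lemma psi_iterate_singleton_one (m : ℕ) : psi^[m] [1] = (List.range (3 ^ m)).map arshonRec := by
  induction m with
  | zero => simp [arshonRec]
  | succ m ih =>
    rw [Function.iterate_succ_apply', ih, psi_map_arshonRec_range, pow_succ, mul_comm]

lemma arshon_eq_arshonRec : arshon = arshonRec := by
  funext n
  have hn : n < 3 ^ (n + 1) :=
    (Nat.lt_pow_self (by norm_num : 1 < 3)).trans
      (Nat.pow_lt_pow_right (by norm_num) n.lt_succ_self)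
  simp [arshon, psi_iterate_singleton_one, hn]

lemma map_arshon_range_psi_iterate (m : ℕ) : (List.range (3 ^ m)).map arshon = psi^[m] [1] := by
  rw [arshon_eq_arshonRec, psi_iterate_singleton_one]

lemma arshon_three_mul_add (q : ℕ) {r : ℕ} (hr : r < 3) :
    arshon (3 * q + r) = ((if q % 2 = 0 then oddBlock else evenBlock) (arshon q)).getD r 0 := by
  rw [arshon_eq_arshonRec, arshonRec_three_mul_add q hr]

lemma arshon_mem (n : ℕ) : arshon n = 1 ∨ arshon n = 2 ∨ arshon n = 3 := by
  rw [arshon_eq_arshonRec]; exact arshonRec_mem n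

lemma arshon_three_mul (q : ℕ) :
    arshon (3 * q) = if q % 2 = 0 then arshon q else prevLetter (arshon q) := by
  rw [← add_zero (3 * q), arshon_three_mul_add q (by norm_num : 0 < 3)]
  rcases arshon_mem q with h | h | h <;> rw [h] <;> split <;> rfl

lemma arshon_three_mul_add_one (q : ℕ) : arshon (3 * q + 1) = nextLetter (arshon q) := by
  rw [arshon_three_mul_add q (by norm_num : 1 < 3)]
  rcases arshon_mem q with h | h | h <;> rw [h] <;> split <;> rfl

lemma arshon_three_mul_add_two (q : ℕ) :
    arshon (3 * q + 2) = if q % 2 = 0 then prevLetter (arshon q) else arshon q := by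
  rw [arshon_three_mul_add q (by norm_num : 2 < 3)]
  rcases arshon_mem q with h | h | h <;> rw [h] <;> split <;> rfl

lemma arshon_succ_ne (k : ℕ) : arshon (k + 1) ≠ arshon k := by
  induction k using Nat.strong_induction_on with
  | _ k ih =>
    obtain ⟨q, rfl | rfl | rfl⟩ : ∃ q, k = 3 * q ∨ k = 3 * q + 1 ∨ k = 3 * q + 2 :=
      ⟨k / 3, by omega⟩
    · rw [arshon_three_mul_add_one, arshon_three_mul]
      rcases arshon_mem q with h | h | h <;> split <;> simp [h, nextLetter, prevLetter]
    · rw [arshon_three_mul_add_one, arshon_three_mul_add_two]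
      rcases arshon_mem q with h | h | h <;> split <;> simp [h, nextLetter, prevLetter]
    · have hq := ih q (by omega)
      rw [show 3 * q + 2 + 1 = 3 * (q + 1) by ring, arshon_three_mul, arshon_three_mul_add_two]
      rcases Nat.mod_two_eq_zero_or_one q with hp | hp
      · rw [if_neg (by omega), if_pos hp]
        exact fun h => hq (prevLetter_injOn (arshon_mem _) (arshon_mem _) h)
      · rwa [if_pos (by omega), if_neg (by omega)]

def IsAscent (k : ℕ) : Prop := arshon (k + 1) = nextLetter (arshon k)

lemma isAscent_three_mul (q : ℕ) : IsAscent (3 * q) ↔ q % 2 = 0 := by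
  rw [IsAscent, arshon_three_mul_add_one, arshon_three_mul]
  rcases Nat.mod_two_eq_zero_or_one q with hp | hp <;> rcases arshon_mem q with h | h | h <;>
    simp [hp, h, nextLetter, prevLetter]

lemma isAscent_three_mul_add_one (q : ℕ) : IsAscent (3 * q + 1) ↔ q % 2 = 0 := by
  rw [IsAscent, arshon_three_mul_add_one, arshon_three_mul_add_two]
  rcases Nat.mod_two_eq_zero_or_one q with hp | hp <;> rcases arshon_mem q with h | h | h <;>
    simp [hp, h, nextLetter, prevLetter]

lemma isAscent_three_mul_add_two (q : ℕ) : IsAscent (3 * q + 2) ↔ IsAscent q := by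
  rw [IsAscent, IsAscent, show 3 * q + 2 + 1 = 3 * (q + 1) by ring, arshon_three_mul,
    arshon_three_mul_add_two]
  rcases Nat.mod_two_eq_zero_or_one q with hp | hp
  · rw [if_neg (by omega), if_pos hp]
    rcases arshon_mem q with h | h | h <;> rcases arshon_mem (q + 1) with h' | h' | h' <;>
      simp [h, h', nextLetter, prevLetter]
  · rw [if_pos (by omega), if_neg (by omega)]

def SquareAt (s m : ℕ) : Prop := ∀ j, s ≤ j → j < s + m → arshon (j + m) = arshon j

namespace SquareAt

variable {s m t : ℕ}

lemma isAscent_add_iff (h : SquareAt s m) {j : ℕ} (hs : s ≤ j) (hj : j + 1 < s + m) :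
    IsAscent (j + m) ↔ IsAscent j := by
  rw [IsAscent, IsAscent, show j + m + 1 = j + 1 + m by ring, h j hs (by omega),
    h (j + 1) (by omega) hj]

lemma of_three_mul (h : SquareAt s (3 * m)) : SquareAt ((s + 1) / 3) m := by
  intro k hk hk'
  have e := h (3 * k + 1) (by omega) (by omega)
  rw [show 3 * k + 1 + 3 * m = 3 * (k + m) + 1 by ring, arshon_three_mul_add_one,
    arshon_three_mul_add_one] at e
  exact nextLetter_injOn (arshon_mem _) (arshon_mem _) e

lemma of_three_mul_add_two (ht : t % 2 = 1) (h : SquareAt s (3 * t + 2)) :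
    SquareAt ((s + 2) / 3) t := by
  intro k hk hk'
  have e := h (3 * k) (by omega) (by omega)
  rw [show 3 * k + (3 * t + 2) = 3 * (k + t) + 2 by ring, arshon_three_mul,
    arshon_three_mul_add_two] at e
  rcases Nat.mod_two_eq_zero_or_one k with hp | hp
  · rwa [if_neg (by omega), if_pos hp] at e
  · rw [if_pos (by omega), if_neg (by omega)] at e
    exact prevLetter_injOn (arshon_mem _) (arshon_mem _) e

lemma not_one : ¬ SquareAt s 1 := fun h => arshon_succ_ne s (h s le_rfl (by omega))

lemma not_three_mul_add_one_of_odd (ht : t % 2 = 1) : ¬ SquareAt s (3 * t + 1) := by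
  intro h
  set q := (s + 2) / 3
  have e₀ := h (3 * q) (by omega) (by omega)
  have e₁ := h (3 * q + 1) (by omega) (by omega)
  rw [show 3 * q + (3 * t + 1) = 3 * (q + t) + 1 by ring, arshon_three_mul_add_one,
    arshon_three_mul] at e₀
  rw [show 3 * q + 1 + (3 * t + 1) = 3 * (q + t) + 2 by ring, arshon_three_mul_add_two,
    arshon_three_mul_add_one] at e₁
  rcases Nat.mod_two_eq_zero_or_one q with hp | hp
  · rw [if_pos hp] at e₀
    rw [if_neg (by omega)] at e₁
    rcases arshon_mem q with a | a | a <;> rcases arshon_mem (q + t) with b | b | b <;>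
      simp [a, b, nextLetter] at e₀ e₁
  · rw [if_neg (by omega)] at e₀
    rw [if_pos (by omega)] at e₁
    rcases arshon_mem q with a | a | a <;> rcases arshon_mem (q + t) with b | b | b <;>
      simp [a, b, nextLetter, prevLetter] at e₀ e₁

lemma not_three_mul_add_two_of_even (ht : t % 2 = 0) : ¬ SquareAt s (3 * t + 2) := by
  intro h
  by_cases hpair : 3 * ((s + 1) / 3) + 2 < s + (3 * t + 2)
  · set q := (s + 1) / 3
    have e₁ := h (3 * q + 1) (by omega) (by omega)
    have e₂ := h (3 * q + 2) (by omega) hpair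
    rw [show 3 * q + 1 + (3 * t + 2) = 3 * (q + t + 1) by ring, arshon_three_mul,
      arshon_three_mul_add_one] at e₁
    rw [show 3 * q + 2 + (3 * t + 2) = 3 * (q + t + 1) + 1 by ring, arshon_three_mul_add_one,
      arshon_three_mul_add_two] at e₂
    rcases Nat.mod_two_eq_zero_or_one q with hp | hp
    · rw [if_neg (by omega)] at e₁
      rw [if_pos hp] at e₂
      rcases arshon_mem q with a | a | a <;> rcases arshon_mem (q + t + 1) with b | b | b <;>
        simp [a, b, nextLetter, prevLetter] at e₁ e₂
    · rw [if_pos (by omega)] at e₁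
      rw [if_neg (by omega)] at e₂
      rcases arshon_mem q with a | a | a <;> rcases arshon_mem (q + t + 1) with b | b | b <;>
        simp [a, b, nextLetter] at e₁ e₂
  · set q := (s + 2) / 3
    have e := h (3 * q) (by omega) (by omega)
    rw [show 3 * q + (3 * t + 2) = 3 * q + 2 by omega, arshon_three_mul,
      arshon_three_mul_add_two] at e
    rcases Nat.mod_two_eq_zero_or_one q with hp | hp <;> simp only [hp] at e <;>
      rcases arshon_mem q with a | a | a <;> simp [a, prevLetter] at e

lemma isAscent_iff_odd (ht : t % 2 = 0) (h : SquareAt s (3 * t + 1)) {k : ℕ}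
    (hk : s ≤ 3 * k + 2) (hk' : 3 * k + 3 < s + (3 * t + 1)) : IsAscent k ↔ k % 2 = 1 := by
  have e := h.isAscent_add_iff hk hk'
  rw [show 3 * k + 2 + (3 * t + 1) = 3 * (k + t + 1) by ring, isAscent_three_mul,
    isAscent_three_mul_add_two] at e
  rw [← e]
  omega

lemma isAscent_add_iff_even (ht : t % 2 = 0) (h : SquareAt s (3 * t + 1)) {k : ℕ}
    (hk : s ≤ 3 * k + 1) (hk' : 3 * k + 2 < s + (3 * t + 1)) :
    IsAscent (k + t) ↔ (k + t) % 2 = 0 := by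
  have e := h.isAscent_add_iff hk hk'
  rw [show 3 * k + 1 + (3 * t + 1) = 3 * (k + t) + 2 by ring, isAscent_three_mul_add_one,
    isAscent_three_mul_add_two] at e
  rw [e]
  omega

/- In the first half of the square, `IsAscent k ↔ k odd` holds on a run of `t` consecutive `k`
and `IsAscent k ↔ k even` on another; the first fails at `k ≡ 0 [MOD 3]`, the second at
`k ≡ 1 [MOD 3]`, and for even `t ≥ 2` one of the runs contains such a `k`. -/
lemma not_three_mul_add_one_of_even (ht : t % 2 = 0) (ht₀ : t ≠ 0) :
    ¬ SquareAt s (3 * t + 1) := by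
  intro h
  by_cases hA : 4 ≤ t ∨ s / 3 % 3 ≠ 1
  · set k := s / 3 + (3 - s / 3 % 3) % 3
    have e := h.isAscent_iff_odd ht (k := k) (by omega) (by omega)
    rw [show k = 3 * (k / 3) by omega, isAscent_three_mul] at e
    omega
  · set k := s / 3 + 1
    have e := h.isAscent_add_iff_even ht (k := k) (by omega) (by omega)
    rw [show k + t = 3 * ((k + t) / 3) + 1 by omega, isAscent_three_mul_add_one] at e
    omega

end SquareAt

lemma not_squareAt {m : ℕ} (hm : 0 < m) (s : ℕ) : ¬ SquareAt s m := by
  induction m using Nat.strong_induction_on generalizing s with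
  | _ m ih =>
    obtain ⟨t, rfl | rfl | rfl⟩ : ∃ t, m = 3 * t ∨ m = 3 * t + 1 ∨ m = 3 * t + 2 :=
      ⟨m / 3, by omega⟩
    · exact fun h => ih t (by omega) (by omega) _ h.of_three_mul
    · rcases Nat.mod_two_eq_zero_or_one t with ht | ht
      · rcases eq_or_ne t 0 with rfl | ht₀
        · exact SquareAt.not_one
        · exact SquareAt.not_three_mul_add_one_of_even ht ht₀
      · exact SquareAt.not_three_mul_add_one_of_odd ht
    · rcases Nat.mod_two_eq_zero_or_one t with ht | ht
      · exact SquareAt.not_three_mul_add_two_of_even ht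
      · exact fun h => ih t (by omega) (by omega) _ (h.of_three_mul_add_two ht)

/-- The factor `w a ⋯ w (a + c - 1)` of the Arshon word `w` (positions counted from 0). -/
def factor (a c : ℕ) : List ℕ := (List.range' a c).map arshon

@[simp] lemma length_factor (a c : ℕ) : (factor a c).length = c := by simp [factor]

lemma factor_eq_take_drop_psi_iterate {a c m : ℕ} (h : a + c ≤ 3 ^ m) :
    factor a c = ((psi^[m] [1]).drop a).take c := by
  rw [← map_arshon_range_psi_iterate, List.range_eq_range', ← List.map_drop, ← List.map_take,
    List.drop_range', List.take_range'_of_length_ge (by omega)]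
  simp [factor]

lemma map_arshon_range_add (a c : ℕ) :
    (List.range (a + c)).map arshon = (List.range a).map arshon ++ factor a c := by
  rw [List.range_eq_range', List.range_eq_range', ← List.range'_append_1, List.map_append]
  simp [factor]

lemma getD_factor {a c i : ℕ} (hi : i < c) : (factor a c).getD i 0 = arshon (a + i) := by
  simp [factor, hi]

theorem factor_ne_factor_add {c : ℕ} (hc : 0 < c) (a : ℕ) :
    factor a c ≠ factor (a + c) c := by
  intro h
  refine not_squareAt hc a fun j hj hj' => ?_
  have e := congrArg (·.getD (j - a) 0) h
  simp only [getD_factor (show j - a < c by omega)] at e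
  rw [show a + c + (j - a) = j + c by omega, show a + (j - a) = j by omega] at e
  exact e.symm

section Morphism

variable {f : List ℕ → List ℕ}

lemma apply_nil_eq_nil (hadd : ∀ u v, f (u ++ v) = f u ++ f v) : f [] = [] := by
  have h := congrArg List.length (hadd [] [])
  simp only [List.nil_append, List.length_append, left_eq_add, List.length_eq_zero_iff] at h
  exact h

lemma length_apply_map_arshon_range_succ (hadd : ∀ u v, f (u ++ v) = f u ++ f v) (n : ℕ) :
    (f ((List.range (n + 1)).map arshon)).length =
      (f ((List.range n).map arshon)).length + (f [arshon n]).length := by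
  rw [List.range_succ, List.map_append, List.map_singleton, hadd, List.length_append]

lemma FixesArshon.image_eq_factor (hadd : ∀ u v, f (u ++ v) = f u ++ f v) (hf : FixesArshon f)
    (n : ℕ) :
    f [arshon n] = factor (f ((List.range n).map arshon)).length (f [arshon n]).length := by
  have h := hf.1 (n + 1)
  rw [List.range_succ, List.map_append, List.map_singleton, hadd, List.length_append,
    map_arshon_range_add, ← hf.1 n] at h
  exact List.append_cancel_left h

lemma FixesArshon.image_eq_nil_of_factor_eq (hadd : ∀ u v, f (u ++ v) = f u ++ f v)
    (hf : FixesArshon f) {n a b : ℕ} (hw : factor n 3 = [a, b, a]) (hb : f [b] = []) :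
    f [a] = [] := by
  simp only [factor, List.range'_succ, List.range'_zero, List.map_cons, List.map_nil,
    List.cons.injEq, and_true] at hw
  obtain ⟨ha₀, hb₁, ha₂⟩ := hw
  have e₀ := hf.image_eq_factor hadd n
  have e₂ := hf.image_eq_factor hadd (n + 2)
  rw [length_apply_map_arshon_range_succ hadd, length_apply_map_arshon_range_succ hadd] at e₂
  simp only [ha₀, hb₁, ha₂, hb, List.length_nil, add_zero] at e₀ e₂
  rw [← List.length_eq_zero_iff]
  by_contra hc
  exact factor_ne_factor_add (Nat.pos_of_ne_zero hc) _ (e₀.symm.trans e₂)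

lemma FixesArshon.length_image_pos (hadd : ∀ u v, f (u ++ v) = f u ++ f v) (hf : FixesArshon f)
    (hsum : 0 < (f [1]).length + (f [2]).length + (f [3]).length) :
    0 < (f [1]).length ∧ 0 < (f [2]).length ∧ 0 < (f [3]).length := by
  have hfactor : ∀ {n a b : ℕ}, factor n 3 = [a, b, a] → f [b] = [] → f [a] = [] :=
    hf.image_eq_nil_of_factor_eq hadd
  have h313 := hfactor (n := 2) (a := 3) (b := 1)
    (by rw [factor_eq_take_drop_psi_iterate (m := 3) (by norm_num)]; rfl)
  have h212 := hfactor (n := 22) (a := 2) (b := 1)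
    (by rw [factor_eq_take_drop_psi_iterate (m := 3) (by norm_num)]; rfl)
  have h131 := hfactor (n := 11) (a := 1) (b := 3)
    (by rw [factor_eq_take_drop_psi_iterate (m := 3) (by norm_num)]; rfl)
  have h121 := hfactor (n := 13) (a := 1) (b := 2)
    (by rw [factor_eq_take_drop_psi_iterate (m := 3) (by norm_num)]; rfl)
  have h₁ : f [1] ≠ [] := fun h => by simp [h, h313 h, h212 h] at hsum
  simp only [List.length_pos_iff]
  exact ⟨h₁, fun h => h₁ (h121 h), fun h => h₁ (h131 h)⟩

lemma FixesArshon.not_length_image_eq_three (hadd : ∀ u v, f (u ++ v) = f u ++ f v)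
    (hf : FixesArshon f) :
    ¬ ((f [1]).length = 3 ∧ (f [2]).length = 3 ∧ (f [3]).length = 3) := by
  rintro ⟨h₁, h₂, h₃⟩
  have e₀ := hf.image_eq_factor hadd 0
  have e₃ := hf.image_eq_factor hadd 3
  have hw : factor 0 4 = [1, 2, 3, 1] := by
    rw [factor_eq_take_drop_psi_iterate (m := 3) (by norm_num)]; rfl
  simp only [factor, List.range'_succ, List.range'_zero, List.map_cons, List.map_nil,
    List.cons.injEq, and_true] at hw
  obtain ⟨hw₀, hw₁, hw₂, hw₃⟩ := hw
  rw [length_apply_map_arshon_range_succ hadd, length_apply_map_arshon_range_succ hadd,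
    length_apply_map_arshon_range_succ hadd] at e₃
  simp only [List.range_zero, List.map_nil, apply_nil_eq_nil hadd, List.length_nil, hw₀, hw₁,
    hw₂, hw₃, h₁, h₂, h₃, Nat.reduceAdd] at e₀ e₃
  have := e₀.symm.trans e₃
  rw [factor_eq_take_drop_psi_iterate (m := 3) (by norm_num),
    factor_eq_take_drop_psi_iterate (m := 3) (by norm_num)] at this
  exact absurd this (by decide)

/-- Undoes `arshon (3 * k + 1) = nextLetter (arshon k)` on factors starting at a multiple of 3. -/
def decodeThirds (u : List ℕ) : List ℕ :=
  (List.range (u.length / 3)).map fun k => prevLetter (u.getD (3 * k + 1) 0)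

lemma decodeThirds_factor (a c : ℕ) : decodeThirds (factor (3 * a) (3 * c)) = factor a c := by
  apply List.ext_getElem
  · simp [decodeThirds]
  · intro i _ hi
    rw [length_factor] at hi
    simp only [decodeThirds, List.getElem_map, List.getElem_range]
    rw [getD_factor (by omega), show 3 * a + (3 * i + 1) = 3 * (a + i) + 1 by ring,
      arshon_three_mul_add_one, prevLetter_nextLetter (arshon_mem _)]
    simp [factor]

lemma FixesArshon.exists_length_div_three (hadd : ∀ u v, f (u ++ v) = f u ++ f v)
    (hf : FixesArshon f)
    (h₁ : 3 ∣ (f [1]).length) (h₂ : 3 ∣ (f [2]).length) (h₃ : 3 ∣ (f [3]).length) :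
    ∃ g, IsMorphism123 g ∧ FixesArshon g ∧ ∀ a, (g [a]).length = (f [a]).length / 3 := by
  set g : List ℕ → List ℕ := fun l => l.flatMap fun a => decodeThirds (f [a])
  have hc : ∀ n, 3 ∣ (f [arshon n]).length := fun n => by
    rcases arshon_mem n with h | h | h <;> rw [h] <;> assumption
  have hL : ∀ n, 3 ∣ (f ((List.range n).map arshon)).length := fun n => by
    induction n with
    | zero => simp [apply_nil_eq_nil hadd]
    | succ n ih => rw [length_apply_map_arshon_range_succ hadd]; exact dvd_add ih (hc n)
  have hg : ∀ n, g ((List.range n).map arshon) =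
      (List.range ((f ((List.range n).map arshon)).length / 3)).map arshon := by
    intro n
    induction n with
    | zero => simp [g, apply_nil_eq_nil hadd]
    | succ n ih =>
      obtain ⟨x, hx⟩ := hL n
      obtain ⟨y, hy⟩ := hc n
      have e := hf.image_eq_factor hadd n
      rw [hx, hy] at e
      rw [hx, Nat.mul_div_cancel_left _ three_pos] at ih
      rw [length_apply_map_arshon_range_succ hadd, hx, hy, ← mul_add,
        Nat.mul_div_cancel_left _ three_pos, map_arshon_range_add x y, ← decodeThirds_factor x y,
        ← e, ← ih]
      simp [g, List.range_succ]
  refine ⟨g, ⟨fun u v => List.flatMap_append, fun l _ x hx => ?_⟩, ⟨fun n => ?_, ?_⟩,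
    fun a => ?_⟩
  · obtain ⟨a, -, hx⟩ := List.mem_flatMap.1 hx
    obtain ⟨k, -, rfl⟩ := List.mem_map.1 hx
    exact prevLetter_mem _
  · rw [hg n, List.length_map, List.length_range]
  · simp only [hg, List.length_map, List.length_range]
    exact (Nat.tendsto_div_const_atTop three_ne_zero).comp hf.2
  · simp [g, decodeThirds]

end Morphism

/-- There is no morphism `f` with `f(w) = w`, `|f(1)|+|f(2)|+|f(3)| > 3`,
`|f(1)|` minimal among all such morphisms, and `|f(1)|, |f(2)|, |f(3)|` all
divisible by 3. -/
theorem arshon_no_minimal_morphism_all_lengths_div_three :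
    ¬ ∃ f : List ℕ → List ℕ, IsMorphism123 f ∧ FixesArshon f ∧
      (f [1]).length + (f [2]).length + (f [3]).length > 3 ∧
      (∀ g : List ℕ → List ℕ, IsMorphism123 g → FixesArshon g →
        (g [1]).length + (g [2]).length + (g [3]).length > 3 →
        (f [1]).length ≤ (g [1]).length) ∧
      3 ∣ (f [1]).length ∧ 3 ∣ (f [2]).length ∧ 3 ∣ (f [3]).length := by
  rintro ⟨f, ⟨hadd, -⟩, hf, hsum, hmin, h₁, h₂, h₃⟩
  obtain ⟨p₁, p₂, p₃⟩ := hf.length_image_pos hadd (by omega)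
  have hne := hf.not_length_image_eq_three hadd
  obtain ⟨g, hg, hgf, hlen⟩ := hf.exists_length_div_three hadd h₁ h₂ h₃
  have hg₁ := hmin g hg hgf (by rw [hlen, hlen, hlen]; omega)
  rw [hlen] at hg₁
  omega
end

section
/- There is no morphism f on finite words over {1,2,3} with f(w) = w (w the Arshon sequence), |f(1)| + |f(2)| + |f(3)| > 3, and |f(1)| = 2. -/
open List Filter

/-!
Positions are `0`-based. Since `w` begins with `12`, a morphism fixing `w` with `|f(1)| = 2` has
`f(1) = 12`, so every `1` of `w`, at position `n` say, is mapped onto an occurrence of `12` at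
position `|f(w[0, n))|`. The letters of `w` at positions `6m + 3, 6m + 4, 6m + 5` form one
even-position block `321`, `132` or `213`, so `12` never occurs at a position `≡ 3, 4 (mod 6)`.
But `|f(w[0, n))|` is a linear form in `a = |f(2)|` and `b = |f(3)|` with coefficients counted in
`w[0, n)`, and for the `1`s at positions `7, 11, 13, 19` these forms already hit `3` or `4`
modulo `6` for every residue of `(a, b)`.
-/

/-- The image under `ψ` of the letter `x` at the `0`-based position `k` (so `k` even is an odd
position of the paper). -/
def psiBlock (k x : ℕ) : List ℕ := if k % 2 = 0 then oddBlock x else evenBlock x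

def psiFrom : ℕ → List ℕ → List ℕ
  | _, [] => []
  | k, x :: l => psiBlock k x ++ psiFrom (k + 1) l

lemma psiFrom_eq_flatten (k : ℕ) (l : List ℕ) :
    psiFrom k l = (((l.zipIdx k).map Prod.swap).map fun p => psiBlock p.1 p.2).flatten := by
  induction l generalizing k with
  | nil => rfl
  | cons x l ih => simp [psiFrom, ih]

lemma psi_eq_psiFrom (l : List ℕ) : psi l = psiFrom 0 l :=
  (psiFrom_eq_flatten 0 l).symm

lemma psiFrom_append (k : ℕ) (u v : List ℕ) :
    psiFrom k (u ++ v) = psiFrom k u ++ psiFrom (k + u.length) v := by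
  induction u generalizing k with
  | nil => rfl
  | cons x u ih => simp [psiFrom, ih, Nat.add_assoc, Nat.add_comm 1]

lemma psi_prefix {u v : List ℕ} (h : u <+: v) : psi u <+: psi v := by
  obtain ⟨t, rfl⟩ := h
  rw [psi_eq_psiFrom, psi_eq_psiFrom, psiFrom_append]
  exact prefix_append _ _

lemma word123_psiBlock (k x : ℕ) : Word123 (psiBlock k x) := by
  unfold psiBlock
  split <;> rcases x with _ | _ | _ | _ | x <;> simp [Word123, oddBlock, evenBlock]

lemma word123_psi (l : List ℕ) : Word123 (psi l) := by
  suffices ∀ k, Word123 (psiFrom k l) from psi_eq_psiFrom l ▸ this 0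
  induction l with
  | nil => intro k a ha; simp [psiFrom] at ha
  | cons x l ih =>
    intro k
    simpa [psiFrom, Word123, or_imp, forall_and] using ⟨word123_psiBlock k x, ih (k + 1)⟩

lemma length_psiBlock {x : ℕ} (hx : x = 1 ∨ x = 2 ∨ x = 3) (k : ℕ) :
    (psiBlock k x).length = 3 := by
  unfold psiBlock
  rcases hx with rfl | rfl | rfl <;> split <;> rfl

lemma length_psiFrom {l : List ℕ} (hl : Word123 l) (k : ℕ) :
    (psiFrom k l).length = 3 * l.length := by
  induction l generalizing k with
  | nil => rfl
  | cons x l ih =>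
    rw [psiFrom, length_append, length_psiBlock (hl x mem_cons_self),
      ih (fun a ha => hl a (mem_cons_of_mem x ha)), length_cons]
    ring

lemma getD_psiFrom {l : List ℕ} (hl : Word123 l) (k : ℕ) {n r : ℕ} (hn : n < l.length)
    (hr : r < 3) :
    (psiFrom k l).getD (3 * n + r) 0 = (psiBlock (k + n) (l.getD n 0)).getD r 0 := by
  induction l generalizing k n with
  | nil => simp at hn
  | cons x l ih =>
    have hx := length_psiBlock (hl x mem_cons_self) k
    rw [psiFrom]
    cases n with
    | zero => rw [Nat.mul_zero, Nat.zero_add, getD_append _ _ _ _ (by omega)]; rfl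
    | succ n =>
      rw [getD_append_right _ _ _ _ (by omega), hx,
        show 3 * (n + 1) + r - 3 = 3 * n + r by omega,
        ih (fun a ha => hl a (mem_cons_of_mem x ha)) _ (by simpa using hn)]
      simp [Nat.add_assoc, Nat.add_comm 1]

lemma word123_psi_iterate (k : ℕ) : Word123 (psi^[k] [1]) := by
  cases k with
  | zero => simp [Word123]
  | succ k => rw [Function.iterate_succ_apply']; exact word123_psi _

lemma length_psi_iterate (k : ℕ) : (psi^[k] [1]).length = 3 ^ k := by
  induction k with
  | zero => rfl
  | succ k ih =>
    rw [Function.iterate_succ_apply', psi_eq_psiFrom, length_psiFrom (word123_psi_iterate k), ih,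
      pow_succ, Nat.mul_comm]

lemma psi_iterate_prefix_succ (k : ℕ) : psi^[k] [1] <+: psi^[k + 1] [1] := by
  induction k with
  | zero => exact ⟨[2, 3], rfl⟩
  | succ k ih =>
    rw [Function.iterate_succ_apply' _ k, Function.iterate_succ_apply' _ (k + 1)]
    exact psi_prefix ih

lemma psi_iterate_prefix {j k : ℕ} (h : j ≤ k) : psi^[j] [1] <+: psi^[k] [1] := by
  induction k, h using Nat.le_induction with
  | base => exact prefix_refl _
  | succ k _ ih => exact ih.trans (psi_iterate_prefix_succ k)

lemma psi_iterate_three :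
    psi^[3] [1] =
      [1, 2, 3, 1, 3, 2, 3, 1, 2, 3, 2, 1, 3, 1, 2, 1, 3, 2, 3, 1, 2, 3, 2, 1, 2, 3, 1] :=
  rfl

lemma List.IsPrefix.getD_eq {α : Type*} {u v : List α} (h : u <+: v) {n : ℕ} (hn : n < u.length)
    (d : α) : u.getD n d = v.getD n d := by
  obtain ⟨t, rfl⟩ := h
  exact (getD_append _ _ _ _ hn).symm

lemma lt_three_pow_succ (n : ℕ) : n < 3 ^ (n + 1) :=
  (Nat.lt_pow_self (by norm_num)).trans (Nat.pow_lt_pow_succ (by norm_num))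

lemma arshon_eq_getD {k n : ℕ} (h : n < 3 ^ k) : arshon n = (psi^[k] [1]).getD n 0 := by
  unfold arshon
  rcases le_total k (n + 1) with hk | hk
  · exact ((psi_iterate_prefix hk).getD_eq (by rwa [length_psi_iterate]) 0).symm
  · exact (psi_iterate_prefix hk).getD_eq
      (by rw [length_psi_iterate]; exact lt_three_pow_succ n) 0

lemma arshon_three_mul_add_s5 (n : ℕ) {r : ℕ} (hr : r < 3) :
    arshon (3 * n + r) = (psiBlock n (arshon n)).getD r 0 := by
  have hn := lt_three_pow_succ n
  rw [arshon_eq_getD (k := n + 2) (by rw [pow_succ]; omega), Function.iterate_succ_apply',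
    psi_eq_psiFrom, getD_psiFrom (word123_psi_iterate _) 0 (by rwa [length_psi_iterate]) hr,
    Nat.zero_add, ← arshon_eq_getD hn]

lemma arshon_mod_six_of_one_two {p : ℕ} (h1 : arshon p = 1) (h2 : arshon (p + 1) = 2) :
    p % 6 ≠ 3 ∧ p % 6 ≠ 4 := by
  by_contra hp
  obtain ⟨m, r, hr, rfl⟩ : ∃ m r, r < 2 ∧ p = 3 * (2 * m + 1) + r :=
    ⟨p / 6, p % 6 - 3, by omega, by omega⟩
  rw [arshon_three_mul_add_s5 _ (by omega)] at h1
  rw [Nat.add_assoc, arshon_three_mul_add_s5 _ (by omega)] at h2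
  have hodd : psiBlock (2 * m + 1) = evenBlock := funext fun _ => if_neg (by omega)
  rw [hodd] at h1 h2
  interval_cases r <;> rcases arshon_mem (2 * m + 1) with h | h | h <;>
    simp [h, evenBlock] at h1 h2

def arshonPrefix (n : ℕ) : List ℕ := (range n).map arshon

lemma arshonPrefix_succ (n : ℕ) : arshonPrefix (n + 1) = arshonPrefix n ++ [arshon n] := by
  simp [arshonPrefix, range_succ]

lemma getD_arshonPrefix {i n : ℕ} (h : i < n) : (arshonPrefix n).getD i 0 = arshon i := by
  simp [arshonPrefix, h]

lemma arshonPrefix_eq_take {k n : ℕ} (h : n ≤ 3 ^ k) :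
    arshonPrefix n = (psi^[k] [1]).take n := by
  refine ext_getElem (by simp [arshonPrefix, length_psi_iterate, h]) fun i hi _ => ?_
  simp only [arshonPrefix, length_map, length_range] at hi
  simp only [arshonPrefix, getElem_map, getElem_range, getElem_take]
  rw [arshon_eq_getD (k := k) (by omega), getD_eq_getElem]

def FixesArshonPrefixes (f : List ℕ → List ℕ) : Prop :=
  ∀ n, f (arshonPrefix n) = arshonPrefix (f (arshonPrefix n)).length

section Morphism

variable {f : List ℕ → List ℕ}

lemma map_nil_of_map_append (hf : ∀ u v, f (u ++ v) = f u ++ f v) : f [] = [] := by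
  simpa using congrArg length (hf [] [])

lemma eq_flatten_of_map_append (hf : ∀ u v, f (u ++ v) = f u ++ f v) (l : List ℕ) :
    f l = (l.map fun a => f [a]).flatten := by
  induction l with
  | nil => exact map_nil_of_map_append hf
  | cons a l ih => rw [← singleton_append, hf, ih]; rfl

lemma length_eq_sum_of_map_append (hf : ∀ u v, f (u ++ v) = f u ++ f v) (l : List ℕ) :
    (f l).length = (l.map fun a => (f [a]).length).sum := by
  rw [eq_flatten_of_map_append hf, length_flatten, List.map_map]
  rfl

lemma arshon_add_of_fixes (hf : ∀ u v, f (u ++ v) = f u ++ f v) (hfix : FixesArshonPrefixes f)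
    (n : ℕ) {i : ℕ} (hi : i < (f [arshon n]).length) :
    arshon ((f (arshonPrefix n)).length + i) = (f [arshon n]).getD i 0 := by
  have h := hfix (n + 1)
  rw [arshonPrefix_succ, hf] at h
  have hget := congrArg (fun l => l.getD ((f (arshonPrefix n)).length + i) 0) h
  rw [getD_append_right _ _ _ _ (by omega), Nat.add_sub_cancel_left,
    getD_arshonPrefix (by simpa using hi)] at hget
  exact hget.symm

lemma image_one_of_fixes (hfix : FixesArshonPrefixes f)
    (h : (f [1]).length = 2) : f [1] = [1, 2] := by
  have hfix1 := hfix 1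
  rwa [show arshonPrefix 1 = [1] from rfl, h, show arshonPrefix 2 = [1, 2] from rfl] at hfix1

lemma length_mod_six_of_fixes (hf : ∀ u v, f (u ++ v) = f u ++ f v)
    (hfix : FixesArshonPrefixes f)
    (h12 : f [1] = [1, 2]) {n : ℕ} (hn : arshon n = 1) :
    (f (arshonPrefix n)).length % 6 ≠ 3 ∧ (f (arshonPrefix n)).length % 6 ≠ 4 := by
  have hpos (i : ℕ) (hi : i < 2) :=
    arshon_add_of_fixes hf hfix n (i := i) (by simp [hn, h12]; omega)
  simp only [hn, h12] at hpos
  exact arshon_mod_six_of_one_two (hpos 0 (by norm_num)) (hpos 1 (by norm_num))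

end Morphism

/-- There is no morphism `f` with `f(w) = w`, `|f(1)|+|f(2)|+|f(3)| > 3`
and `|f(1)| = 2`. -/
theorem arshon_no_fixing_morphism_length_eq_2 :
    ¬ ∃ f : List ℕ → List ℕ, IsMorphism123 f ∧ FixesArshon f ∧
      (f [1]).length + (f [2]).length + (f [3]).length > 3 ∧
      (f [1]).length = 2 := by
  rintro ⟨f, ⟨hf, -⟩, ⟨hfix, -⟩, -, hlen⟩
  have h12 := image_one_of_fixes hfix hlen
  have hmod (n : ℕ) (hn : n < 27) (h1 : (psi^[3] [1]).getD n 0 = 1) :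
      (((psi^[3] [1]).take n).map fun a => (f [a]).length).sum % 6 ≠ 3 ∧
      (((psi^[3] [1]).take n).map fun a => (f [a]).length).sum % 6 ≠ 4 := by
    rw [← arshonPrefix_eq_take (by omega), ← length_eq_sum_of_map_append hf]
    exact length_mod_six_of_fixes hf hfix h12 ((arshon_eq_getD (by omega)).trans h1)
  have h7 := hmod 7 (by norm_num) rfl
  have h11 := hmod 11 (by norm_num) rfl
  have h13 := hmod 13 (by norm_num) rfl
  have h19 := hmod 19 (by norm_num) rfl
  simp only [psi_iterate_three, take, List.map, sum_cons, sum_nil, hlen] at h7 h11 h13 h19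
  obtain ⟨ra, hra, ha⟩ : ∃ r, r < 6 ∧ (f [2]).length % 6 = r :=
    ⟨_, Nat.mod_lt _ (by norm_num), rfl⟩
  obtain ⟨rb, hrb, hb⟩ : ∃ r, r < 6 ∧ (f [3]).length % 6 = r :=
    ⟨_, Nat.mod_lt _ (by norm_num), rfl⟩
  interval_cases ra <;> interval_cases rb <;> omega
end

section
/- There is no morphism f on finite words over {1,2,3} with f(w) = w (w the Arshon sequence), |f(1)| + |f(2)| + |f(3)| > 3, and |f(1)| = 4. -/
open List Filter

/-!
Since `f` fixes `w` and `w` begins with `1231`, `f(1) = 1231`. Whenever `w n = 1`, the image of the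
prefix `w[0, n)` is a prefix of `w` followed by `f(1)`, so `1231` occurs in `w` at position
`|f(w[0, n))|`. Reading `w` as a concatenation of ψ-blocks, `1231` can only start at a block boundary
`3j` with `j` even (block `123`) or one letter before a block `231` at `3j + 3` with `j` odd, i.e. at
positions `≡ 0, 5 (mod 6)`. With `s = |f(2)| + |f(3)|`, the occurrences of `1` at positions 3 and 11
give `4 + s` and `12 + 4s` in `{0, 5} (mod 6)`; the second forces `3 ∣ s`, contradicting the first.
-/

namespace Arshon

def block (i a : ℕ) : List ℕ := if i % 2 = 0 then oddBlock a else evenBlock a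

def psiFrom (k : ℕ) (l : List ℕ) : List ℕ := (l.zipIdx k).flatMap fun p => block p.2 p.1

lemma psi_eq_psiFrom (l : List ℕ) : psi l = psiFrom 0 l := by
  simp [psi, psiFrom, block, List.flatMap_def, Function.comp_def]

lemma psiFrom_append (k : ℕ) (u v : List ℕ) :
    psiFrom k (u ++ v) = psiFrom k u ++ psiFrom (k + u.length) v := by
  simp [psiFrom, List.zipIdx_append]

lemma psiFrom_cons (k a : ℕ) (l : List ℕ) :
    psiFrom k (a :: l) = block k a ++ psiFrom (k + 1) l := by
  simp [psiFrom]

lemma psi_mono {u v : List ℕ} (h : u <+: v) : psi u <+: psi v := by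
  obtain ⟨t, rfl⟩ := h
  rw [psi_eq_psiFrom, psi_eq_psiFrom, psiFrom_append]
  exact List.prefix_append _ _

lemma length_block (i : ℕ) {a : ℕ} (ha : a = 1 ∨ a = 2 ∨ a = 3) : (block i a).length = 3 := by
  unfold block; rcases ha with rfl | rfl | rfl <;> split <;> rfl

lemma word_block (i : ℕ) {a : ℕ} (ha : a = 1 ∨ a = 2 ∨ a = 3) : Word123 (block i a) := by
  unfold block Word123; rcases ha with rfl | rfl | rfl <;> split <;> decide

lemma length_psiFrom (k : ℕ) {l : List ℕ} (hl : Word123 l) :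
    (psiFrom k l).length = 3 * l.length := by
  induction l generalizing k with
  | nil => rfl
  | cons a l ih =>
    obtain ⟨ha, hl⟩ := List.forall_mem_cons.mp hl
    rw [psiFrom_cons, List.length_append, length_block k ha, ih (k + 1) hl, List.length_cons]
    ring

lemma word_psiFrom (k : ℕ) {l : List ℕ} (hl : Word123 l) : Word123 (psiFrom k l) := by
  induction l generalizing k with
  | nil => simp [psiFrom, Word123]
  | cons a l ih =>
    obtain ⟨ha, hl⟩ := List.forall_mem_cons.mp hl
    rw [psiFrom_cons]
    exact List.forall_mem_append.mpr ⟨word_block k ha, ih (k + 1) hl⟩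

lemma psi_take {l : List ℕ} (hl : Word123 l) {n : ℕ} (hn : n ≤ l.length) :
    psi (l.take n) = (psi l).take (3 * n) := by
  have hw : Word123 (l.take n) := fun a ha => hl a (List.mem_of_mem_take ha)
  conv_rhs => rw [← List.take_append_drop n l, psi_eq_psiFrom, psiFrom_append]
  rw [List.take_left' (by rw [length_psiFrom 0 hw, List.length_take_of_le hn]), psi_eq_psiFrom]

lemma word_psi_iterate (k : ℕ) : Word123 (psi^[k] [1]) := by
  induction k with
  | zero => simp [Word123]
  | succ k ih =>
    rw [Function.iterate_succ_apply', psi_eq_psiFrom]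
    exact word_psiFrom 0 ih

lemma length_psi_iterate (k : ℕ) : (psi^[k] [1]).length = 3 ^ k := by
  induction k with
  | zero => rfl
  | succ k ih =>
    rw [Function.iterate_succ_apply', psi_eq_psiFrom, length_psiFrom 0 (word_psi_iterate k), ih,
      pow_succ, mul_comm]

lemma lt_length_psi_iterate_succ (n : ℕ) : n < (psi^[n + 1] [1]).length := by
  rw [length_psi_iterate]
  exact (Nat.lt_pow_self (by norm_num)).trans (Nat.pow_lt_pow_succ (by norm_num))

lemma psi_iterate_prefix_succ (k : ℕ) : psi^[k] [1] <+: psi^[k + 1] [1] := by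
  induction k with
  | zero => exact ⟨[2, 3], rfl⟩
  | succ k ih =>
    rw [Function.iterate_succ_apply' psi k, Function.iterate_succ_apply' psi (k + 1)]
    exact psi_mono ih

lemma psi_iterate_prefix_of_le {k m : ℕ} (h : k ≤ m) : psi^[k] [1] <+: psi^[m] [1] := by
  induction m, h using Nat.le_induction with
  | base => exact List.prefix_refl _
  | succ m _ ih => exact ih.trans (psi_iterate_prefix_succ m)

lemma arshon_eq_getElem {k n : ℕ} (hn : n < (psi^[k] [1]).length) :
    arshon n = (psi^[k] [1])[n] := by
  have hn' := lt_length_psi_iterate_succ n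
  rw [arshon, List.getD_eq_getElem _ _ hn',
    (psi_iterate_prefix_of_le (le_max_left (n + 1) k)).getElem hn',
    (psi_iterate_prefix_of_le (le_max_right (n + 1) k)).getElem hn]

lemma arshon_mem (n : ℕ) : arshon n = 1 ∨ arshon n = 2 ∨ arshon n = 3 := by
  have hn := lt_length_psi_iterate_succ n
  rw [arshon_eq_getElem hn]
  exact word_psi_iterate _ _ (List.getElem_mem hn)

lemma map_range_arshon_eq_take {k n : ℕ} (hn : n ≤ 3 ^ k) :
    (List.range n).map arshon = (psi^[k] [1]).take n := by
  apply List.ext_getElem (by simp [length_psi_iterate, hn])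
  intro i hi _
  simp only [List.getElem_map, List.getElem_range, List.getElem_take]
  exact arshon_eq_getElem _

lemma psi_map_range_arshon (n : ℕ) :
    psi ((List.range n).map arshon) = (List.range (3 * n)).map arshon := by
  have hn : n ≤ 3 ^ n := (Nat.lt_pow_self (by norm_num)).le
  rw [map_range_arshon_eq_take hn, map_range_arshon_eq_take (k := n + 1) (by rw [pow_succ']; omega),
    psi_take (word_psi_iterate n) (by rw [length_psi_iterate]; exact hn),
    Function.iterate_succ_apply']

lemma map_range_add {α : Type*} (s : ℕ → α) (m k : ℕ) :
    (List.range (m + k)).map s = (List.range m).map s ++ (List.range k).map (fun t => s (m + t)) := by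
  simp [List.range_add, Function.comp_def]

lemma getD_map_range {α : Type*} (s : ℕ → α) (d : α) {n t : ℕ} (ht : t < n) :
    ((List.range n).map s).getD t d = s t := by
  simp [ht]

lemma arshon_window (j : ℕ) : (List.range 6).map (fun t => arshon (3 * j + t)) =
    block j (arshon j) ++ block (j + 1) (arshon (j + 1)) := by
  have h := psi_map_range_arshon (j + 2)
  rw [show 3 * (j + 2) = 3 * j + 6 by ring, map_range_add, map_range_add, ← psi_map_range_arshon,
    psi_eq_psiFrom, psi_eq_psiFrom, psiFrom_append] at h
  simpa [List.range_succ, psiFrom] using h.symm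

-- `3 * e + r` is the residue mod 6 of a position `3 * j + r` with `j ≡ e (mod 2)`.
lemma offset_of_factor_1231_in_blocks : ∀ e < 2, ∀ a ∈ [1, 2, 3], ∀ b ∈ [1, 2, 3], ∀ r < 3,
    (∀ t < 4, (block e a ++ block (e + 1) b).getD (r + t) 0 = [1, 2, 3, 1].getD t 0) →
      3 * e + r = 0 ∨ 3 * e + r = 5 := by
  decide

lemma mod_six_of_factor_1231 {p : ℕ}
    (h : (List.range 4).map (fun t => arshon (p + t)) = [1, 2, 3, 1]) : p % 6 = 0 ∨ p % 6 = 5 := by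
  obtain ⟨j, r, hr, rfl⟩ : ∃ j r, r < 3 ∧ p = 3 * j + r :=
    ⟨p / 3, p % 3, Nat.mod_lt _ (by norm_num), by omega⟩
  have hwin : ∀ t < 4, (block j (arshon j) ++ block (j + 1) (arshon (j + 1))).getD (r + t) 0
      = [1, 2, 3, 1].getD t 0 := by
    intro t ht
    rw [← arshon_window, ← h, getD_map_range _ _ (by omega), getD_map_range _ _ ht, add_assoc]
  have hparity : ∀ i a, block i a = block (i % 2) a := by simp [block]
  have hsucc : block (j + 1) (arshon (j + 1)) = block (j % 2 + 1) (arshon (j + 1)) := by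
    rw [hparity, hparity (j % 2 + 1)]; congr 1; omega
  rw [hsucc, hparity j] at hwin
  have := offset_of_factor_1231_in_blocks (j % 2) (Nat.mod_lt _ (by norm_num))
    _ (by simpa using arshon_mem j) _ (by simpa using arshon_mem (j + 1)) r hr hwin
  omega

lemma map_range_arshon_twelve :
    (List.range 12).map arshon = [1, 2, 3, 1, 3, 2, 3, 1, 2, 3, 2, 1] := by
  rw [map_range_arshon_eq_take (k := 3) (by norm_num)]
  decide

end Arshon

open Arshon

lemma apply_eq_flatMap_of_map_append {α β : Type*} {f : List α → List β}
    (hf : ∀ u v, f (u ++ v) = f u ++ f v) (l : List α) : f l = l.flatMap fun a => f [a] := by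
  have hnil : f [] = [] := by
    simpa using congrArg List.length (hf [] [])
  induction l with
  | nil => exact hnil
  | cons a l ih => rw [← List.singleton_append, hf, ih]; rfl

lemma length_mod_six_of_arshon_eq_one {f : List ℕ → List ℕ} (hf : ∀ u v, f (u ++ v) = f u ++ f v)
    (hfix : ∀ n, f ((List.range n).map arshon)
      = (List.range (f ((List.range n).map arshon)).length).map arshon)
    (h1 : f [1] = [1, 2, 3, 1]) {n : ℕ} (hn : arshon n = 1) :
    (f ((List.range n).map arshon)).length % 6 = 0 ∨
      (f ((List.range n).map arshon)).length % 6 = 5 := by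
  apply mod_six_of_factor_1231
  have h := hfix (n + 1)
  rw [List.range_succ, List.map_append, hf, List.map_singleton, hn, h1, hfix n] at h
  simpa [map_range_add] using h.symm

/-- There is no morphism `f` with `f(w) = w`, `|f(1)|+|f(2)|+|f(3)| > 3`
and `|f(1)| = 4`. -/
theorem arshon_no_fixing_morphism_length_eq_4 :
    ¬ ∃ f : List ℕ → List ℕ, IsMorphism123 f ∧ FixesArshon f ∧
      (f [1]).length + (f [2]).length + (f [3]).length > 3 ∧
      (f [1]).length = 4 := by
  rintro ⟨f, ⟨hf, -⟩, ⟨hfix, -⟩, -, h4⟩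
  have hprefix : ∀ n ≤ 12,
      (List.range n).map arshon = [1, 2, 3, 1, 3, 2, 3, 1, 2, 3, 2, 1].take n := fun n hn => by
    rw [← map_range_arshon_twelve, ← List.map_take, List.take_range, min_eq_left hn]
  have harshon : ∀ n < 12, arshon n = [1, 2, 3, 1, 3, 2, 3, 1, 2, 3, 2, 1].getD n 0 :=
    fun n hn => by rw [← map_range_arshon_twelve, getD_map_range _ _ hn]
  have hf1 : f [1] = [1, 2, 3, 1] := by
    have h : f [1] = (List.range (f [1]).length).map arshon := by
      simpa only [hprefix 1 (by norm_num), List.take_succ_cons, List.take_zero] using hfix 1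
    rwa [h4, hprefix 4 (by norm_num)] at h
  have h3 := length_mod_six_of_arshon_eq_one hf hfix hf1 (harshon 3 (by norm_num))
  have h11 := length_mod_six_of_arshon_eq_one hf hfix hf1 (harshon 11 (by norm_num))
  rw [hprefix 3 (by norm_num), apply_eq_flatMap_of_map_append hf] at h3
  rw [hprefix 11 (by norm_num), apply_eq_flatMap_of_map_append hf] at h11
  simp [h4] at h3 h11
  omega
end
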